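/- arXiv:1605.07867 — 5 statements merged into one kernel-verified Lean document; each statement's English description precedes it below -/
import Mathlib

section
/- Let G be a group such that for all a, b ∈ G, either C(a) ∩ C(b) has finite index in C(a) or finite index in C(b), and assume C(a) is infinite for every a ∈ G. Then for every finite list a₀, …, a_{n−1} of elements of G, the intersection C(a₀) ∩ ⋯ ∩ C(a_{n−1}) is infinite. -/
/-!
By induction on a nonempty finite family of subgroups that pairwise satisfy the hypothesis,
some member `H i` contains the intersection of the family with finite index: adding `H a` to a
family whose intersection `K` has finite index in `H b`, either `H a ⊓ H b` has finite index in
`H a`, and then so does `H a ⊓ K`, or it has finite index in `H b`, and then so does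
`H a ⊓ K ⊇ (H a ⊓ H b) ⊓ K`.
A finite-index subgroup of an infinite centralizer is infinite.
-/

namespace Subgroup

variable {G : Type*} [Group G]

theorem infinite_of_relIndex_ne_zero {H K : Subgroup G} (hHK : H.relIndex K ≠ 0) [Infinite K] :
    Infinite H := by
  by_contra hH
  rw [not_infinite_iff_finite] at hH
  have : Finite (H.subgroupOf K) :=
    Finite.of_injective (fun x ↦ (⟨x.1, x.2⟩ : H)) fun _ _ hxy ↦
      Subtype.ext (Subtype.ext (congrArg (fun y : H ↦ (y : G)) hxy))
  have : (H.subgroupOf K).FiniteIndex := ⟨hHK⟩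
  have : Finite K := (finite_iff_finite_and_finiteIndex (H.subgroupOf K)).2 ⟨‹_›, ‹_›⟩
  exact not_finite K

theorem exists_relIndex_biInf_ne_zero {ι : Type*} {H : ι → Subgroup G}
    (hH : ∀ i j, (H i ⊓ H j).relIndex (H i) ≠ 0 ∨ (H i ⊓ H j).relIndex (H j) ≠ 0)
    {s : Finset ι} (hs : s.Nonempty) : ∃ i ∈ s, (⨅ j ∈ s, H j).relIndex (H i) ≠ 0 := by
  induction hs using Finset.Nonempty.cons_induction with
  | singleton i => exact ⟨i, Finset.mem_singleton_self i, by simp⟩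
  | cons i t hit _ ih =>
    obtain ⟨j, hjt, hj⟩ := ih
    have hcons : ⨅ k ∈ Finset.cons i t hit, H k = H i ⊓ ⨅ k ∈ t, H k := by
      simp [Finset.mem_cons, iInf_or, iInf_inf_eq]
    rw [hcons]
    rcases hH i j with hi | hj'
    · refine ⟨i, Finset.mem_cons_self i t, ?_⟩
      rw [inf_relIndex_left]
      exact relIndex_ne_zero_trans
        (mt (relIndex_eq_zero_of_le_right inf_le_right) hj) hi
    · refine ⟨j, Finset.mem_cons_of_mem hjt, ?_⟩
      have hle : H i ⊓ H j ⊓ ⨅ k ∈ t, H k ≤ H i ⊓ ⨅ k ∈ t, H k := inf_le_inf_right _ inf_le_left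
      exact mt (relIndex_eq_zero_of_le_left hle) (relIndex_inf_ne_zero hj' hj)

end Subgroup

open Subgroup in
theorem finite_inter_centralizers_infinite {G : Type*} [Group G]
    (h : ∀ a b : G,
      Finite ((Subgroup.centralizer {a}) ⧸
        ((Subgroup.centralizer {a} ⊓ Subgroup.centralizer {b}).subgroupOf
          (Subgroup.centralizer {a}))) ∨
      Finite ((Subgroup.centralizer {b}) ⧸
        ((Subgroup.centralizer {a} ⊓ Subgroup.centralizer {b}).subgroupOf
          (Subgroup.centralizer {b}))))
    (hinf : ∀ a : G, Infinite (Subgroup.centralizer {a})) :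
    ∀ s : Finset G, Infinite (⨅ a ∈ s, Subgroup.centralizer {a} : Subgroup G) := by
  classical
  intro s
  have hpair (a b : G) : (centralizer {a} ⊓ centralizer {b}).relIndex (centralizer {a}) ≠ 0 ∨
      (centralizer {a} ⊓ centralizer {b}).relIndex (centralizer {b}) ≠ 0 :=
    (h a b).imp (fun hfin ↦ index_ne_zero_of_finite (hH := hfin))
      (fun hfin ↦ index_ne_zero_of_finite (hH := hfin))
  -- Adjoining `1` makes the finset nonempty and can only shrink the intersection.
  obtain ⟨a, -, ha⟩ := exists_relIndex_biInf_ne_zero hpair (s.insert_nonempty 1)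
  have := hinf a
  have := infinite_of_relIndex_ne_zero ha
  have hle : ⨅ b ∈ insert 1 s, centralizer {b} ≤ ⨅ b ∈ s, centralizer {b} :=
    biInf_mono fun _ ↦ Finset.mem_insert_of_mem
  exact Infinite.of_injective _ (inclusion_injective hle)
end

section
/- Let H be a group, n and N positive natural numbers, and (K_i)_{i ∈ S} a family of subgroups of H, each of index less than n in H, with the property that for every finite subset F ⊆ S there exists a subset F₀ ⊆ F with |F₀| ≤ N such that ⋂_{i ∈ F} K_i = ⋂_{i ∈ F₀} K_i. Then the intersection ⋂_{i ∈ S} K_i equals ⋂_{i ∈ F₀} K_i for some subset F₀ ⊆ S of size at most N; in particular it has index less than n^N in H. -/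
/-!
Among the intersections of at most `N` of the `K i`, whose indices are bounded by `(n - 1) ^ N`,
choose one, `M`, of maximal index. For any `j`, the subgroup `K j ⊓ M` is again an intersection
of at most `N` of the `K i`, so its index is at most that of `M`; being contained in `M` with
finite index, it equals `M`. Hence `M ≤ K j` for every `j`, and `M` is the whole intersection.
-/

namespace Subgroup

variable {G : Type*} [Group G] {ι : Type*}

lemma mk_quotient_lt_natCast_iff {K : Subgroup G} {n : ℕ} :
    Cardinal.mk (G ⧸ K) < n ↔ K.FiniteIndex ∧ K.index < n := by
  rw [finiteIndex_iff_finite_quotient, index_eq_card]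
  constructor
  · intro h
    have : Finite (G ⧸ K) :=
      Cardinal.mk_lt_aleph0_iff.mp (h.trans (Cardinal.natCast_lt_aleph0))
    exact ⟨this, by rwa [← Nat.cast_card, Nat.cast_lt] at h⟩
  · rintro ⟨_, h⟩
    rwa [← Nat.cast_card, Nat.cast_lt]

lemma index_biInf_le_pow {K : ι → Subgroup G} {m : ℕ} (s : Finset ι)
    (hm : ∀ i ∈ s, (K i).index ≤ m) : (⨅ i ∈ s, K i).index ≤ m ^ s.card := by
  rw [iInf_subtype']
  calc (⨅ i : s, K i).index ≤ ∏ i : s, (K i).index := index_iInf_le _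
    _ ≤ ∏ _i : s, m := Finset.prod_le_prod' fun i _ => hm i i.2
    _ = m ^ s.card := by simp

lemma iInf_eq_biInf_of_index_maximal {K : ι → Subgroup G} {N : ℕ}
    (hK : ∀ i, (K i).FiniteIndex)
    (hBS : ∀ F : Finset ι, ∃ F' : Finset ι, F'.card ≤ N ∧ ⨅ i ∈ F, K i = ⨅ i ∈ F', K i)
    {F₀ : Finset ι}
    (hmax : ∀ F : Finset ι, F.card ≤ N → (⨅ i ∈ F, K i).index ≤ (⨅ i ∈ F₀, K i).index) :
    ⨅ i, K i = ⨅ i ∈ F₀, K i := by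
  classical
  refine le_antisymm (le_iInf₂ fun i _ => iInf_le K i) (le_iInf fun j => ?_)
  obtain ⟨F, hF, hFeq⟩ := hBS (insert j F₀)
  have : (⨅ i ∈ insert j F₀, K i).FiniteIndex := finiteIndex_iInf' K fun i _ => hK i
  rw [Finset.iInf_insert] at hFeq this
  have heq : K j ⊓ ⨅ i ∈ F₀, K i = ⨅ i ∈ F₀, K i := by
    refine inf_le_right.eq_of_not_lt fun hlt => (index_strictAnti hlt).not_ge ?_
    rw [hFeq]
    exact hmax F hF
  exact inf_eq_right.mp heq

lemma exists_card_le_and_iInf_eq_biInf {K : ι → Subgroup G} {N m : ℕ}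
    (hK : ∀ i, (K i).FiniteIndex) (hm : ∀ i, (K i).index ≤ m)
    (hBS : ∀ F : Finset ι, ∃ F' : Finset ι, F'.card ≤ N ∧ ⨅ i ∈ F, K i = ⨅ i ∈ F', K i) :
    ∃ F₀ : Finset ι, F₀.card ≤ N ∧ ⨅ i, K i = ⨅ i ∈ F₀, K i := by
  let indices := (fun F : Finset ι => (⨅ i ∈ F, K i).index) '' {F | F.card ≤ N}
  have hbdd : BddAbove indices := by
    refine ⟨(m + 1) ^ N, ?_⟩
    rintro _ ⟨F, hF, rfl⟩
    exact (index_biInf_le_pow F fun i _ => (hm i).trans m.le_succ).trans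
      (Nat.pow_le_pow_right m.succ_pos hF)
  obtain ⟨_, ⟨F₀, hF₀, rfl⟩, hmax⟩ :=
    hbdd.exists_isGreatest_of_nonempty ⟨_, ∅, Nat.zero_le _, rfl⟩
  exact ⟨F₀, hF₀, iInf_eq_biInf_of_index_maximal hK hBS fun F hF => hmax ⟨F, hF, rfl⟩⟩

end Subgroup

theorem baldwin_saxl_intersection_general {H : Type*} [Group H] {S : Type*} [Nonempty S]
    (n N : ℕ) (hN : 0 < N) (K : S → Subgroup H)
    (hidx : ∀ i : S, Cardinal.mk (H ⧸ K i) < n)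
    (hBS : ∀ F : Finset S, ∃ F₀ ⊆ F, F₀.card ≤ N ∧ (⨅ i ∈ F, K i) = ⨅ i ∈ F₀, K i) :
    ∃ F₀ : Finset S, F₀.card ≤ N ∧ (⨅ i, K i) = (⨅ i ∈ F₀, K i) ∧
      Cardinal.mk (H ⧸ (⨅ i, K i)) < (n : Cardinal) ^ N := by
  have hK (i : S) := Subgroup.mk_quotient_lt_natCast_iff.mp (hidx i)
  have hm (i : S) : (K i).index ≤ n - 1 := by have := (hK i).2; omega
  have hn : 2 ≤ n := by
    obtain ⟨i⟩ := ‹Nonempty S›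
    have := (hK i).1.index_ne_zero
    have := (hK i).2
    omega
  obtain ⟨F₀, hcard, heq⟩ := Subgroup.exists_card_le_and_iInf_eq_biInf (fun i => (hK i).1) hm
    fun F => (hBS F).imp fun _ h => h.2
  refine ⟨F₀, hcard, heq, ?_⟩
  rw [← Nat.cast_pow, Subgroup.mk_quotient_lt_natCast_iff, heq]
  refine ⟨Subgroup.finiteIndex_iInf' K fun i _ => (hK i).1, ?_⟩
  calc (⨅ i ∈ F₀, K i).index ≤ (n - 1) ^ F₀.card :=
        Subgroup.index_biInf_le_pow F₀ fun i _ => hm i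
    _ ≤ (n - 1) ^ N := Nat.pow_le_pow_right (by omega) hcard
    _ < n ^ N := Nat.pow_lt_pow_left (by omega) hN.ne'

theorem baldwin_saxl_intersection {H : Type*} [Group H] {S : Type*} [Nonempty S]
    (n N : ℕ) (hn : 0 < n) (hN : 0 < N) (K : S → Subgroup H)
    (hidx : ∀ i : S, Cardinal.mk (H ⧸ K i) < n)
    (hBS : ∀ F : Finset S, ∃ F₀ ⊆ F, F₀.card ≤ N ∧ (⨅ i ∈ F, K i) = ⨅ i ∈ F₀, K i) :
    ∃ F₀ : Finset S, F₀.card ≤ N ∧ (⨅ i, K i) = (⨅ i ∈ F₀, K i) ∧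
      Cardinal.mk (H ⧸ (⨅ i, K i)) < (n : Cardinal) ^ N :=
  baldwin_saxl_intersection_general n N hN K hidx hBS
end

section
/- Let G be a group and suppose there is a function assigning to each a ∈ G a subgroup C⁰(a) ≤ C(a) (where C(a) is the centralizer of a), together with a natural number K such that [C(a) : C⁰(a)] < K for all a. Then there is no sequence (a_n)_{n<ω} of elements of G satisfying: (i) a_{n+1} ∈ C⁰(a_n) for all n; (ii) C⁰(a_{n+1}) ≤ C⁰(a_n) for all n; (iii) a_n ∉ C⁰(a_n) for all n. -/
/-!
Along such a sequence the groups `C⁰(aₙ)` decrease, so `a_K ∈ C⁰(aᵢ) ≤ C(aᵢ)` for every `i < K`,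
i.e. `a₀, …, a_{K-1}` all lie in `C(a_K)`. As `C⁰(a_K)` has fewer than `K` cosets in `C(a_K)`,
two of them, `aᵢ` and `aⱼ` with `i < j`, share a coset: `aᵢ⁻¹ aⱼ ∈ C⁰(a_K) ≤ C⁰(aᵢ)`.
Together with `aⱼ ∈ C⁰(aᵢ)` this forces `aᵢ ∈ C⁰(aᵢ)`.
-/

open Cardinal

theorem Cardinal.exists_ne_map_eq_of_mk_lt {α : Type*} {K : ℕ} (h : #α < K) (f : Fin K → α) :
    ∃ i j, i ≠ j ∧ f i = f j := by
  by_contra! hf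
  have hle := lift_mk_le'.mpr
    ⟨(⟨f, fun i j hij => by_contra fun hne => hf i j hne hij⟩ : Fin K ↪ α)⟩
  rw [mk_fin, lift_natCast, lift_uzero] at hle
  exact h.not_ge hle

theorem Subgroup.exists_lt_inv_mul_mem_of_mk_quotient_lt {G : Type*} [Group G]
    {H S : Subgroup G} {K : ℕ} (hK : #(H ⧸ S.subgroupOf H) < K) (b : ℕ → G)
    (hb : ∀ i < K, b i ∈ H) : ∃ i j, i < j ∧ j < K ∧ (b i)⁻¹ * b j ∈ S := by
  obtain ⟨i, j, hne, heq⟩ := exists_ne_map_eq_of_mk_lt hK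
    fun i : Fin K => (⟨b i, hb i i.2⟩ : H)
  wlog hij : i < j generalizing i j
  · exact this j i hne.symm heq.symm (lt_of_le_of_ne (not_lt.mp hij) hne.symm)
  exact ⟨i, j, hij, j.2, mem_subgroupOf.mp (QuotientGroup.eq.mp heq)⟩

theorem Subgroup.mem_of_inv_mul_mem {G : Type*} [Group G] {S : Subgroup G} {x y : G}
    (hxy : x⁻¹ * y ∈ S) (hy : y ∈ S) : x ∈ S :=
  inv_mem_iff.mp ((mul_mem_cancel_right hy).mp hxy)

theorem Subgroup.mem_centralizer_singleton_comm {G : Type*} [Group G] {g k : G} :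
    g ∈ centralizer {k} ↔ k ∈ centralizer {g} := by
  simp only [mem_centralizer_singleton_iff, eq_comm]

theorem no_descending_sequence {G : Type*} [Group G]
    (C0 : G → Subgroup G) (hle : ∀ a : G, C0 a ≤ Subgroup.centralizer {a})
    (K : ℕ)
    (hK : ∀ a : G, Cardinal.mk ((Subgroup.centralizer {a}) ⧸
        ((C0 a).subgroupOf (Subgroup.centralizer {a}))) < K) :
    ¬ ∃ a : ℕ → G,
      (∀ n : ℕ, a (n + 1) ∈ C0 (a n)) ∧
      (∀ n : ℕ, C0 (a (n + 1)) ≤ C0 (a n)) ∧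
      (∀ n : ℕ, a n ∉ C0 (a n)) := by
  rintro ⟨a, hsucc, hdesc, hnot⟩
  have hanti : Antitone (C0 ∘ a) := antitone_nat_of_succ_le hdesc
  have hmem {n m : ℕ} (hnm : n < m) : a m ∈ C0 (a n) := by
    obtain ⟨k, rfl⟩ := Nat.exists_eq_add_of_lt hnm
    exact hanti (Nat.le_add_right n k) (hsucc (n + k))
  have hcent {i : ℕ} (hi : i < K) : a i ∈ Subgroup.centralizer {a K} :=
    Subgroup.mem_centralizer_singleton_comm.mp (hle _ (hmem hi))
  obtain ⟨i, j, hij, hjK, hcoset⟩ :=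
    Subgroup.exists_lt_inv_mul_mem_of_mk_quotient_lt (hK (a K)) a fun _ => hcent
  exact hnot i (Subgroup.mem_of_inv_mul_mem (hanti (hij.trans hjK).le hcoset) (hmem hij))
end

section
/- Let G be a group having no proper subgroup of finite index. If Z(G) is finite, then the quotient G / Z(G) has trivial center. -/
/-!
If `gZ` is central in `G ⧸ Z(G)`, every commutator `⁅x, g⁆` lies in the finite group `Z(G)`.
Since `x ↦ ⁅x, g⁆` separates the cosets of the centralizer of `g`, that centralizer has finite
index, hence is all of `G`, i.e. `g ∈ Z(G)`.
-/

open Subgroup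
open scoped commutatorElement

theorem Subgroup.finite_quotient_centralizer_of_commutatorElement_mem {G : Type*} [Group G]
    {N : Subgroup G} [Finite N] {g : G} (hg : ∀ x : G, ⁅x, g⁆ ∈ N) :
    Finite (G ⧸ centralizer {g}) := by
  let f : G ⧸ centralizer {g} → N := fun q =>
    ⟨quotientCentralizerEmbedding g q, QuotientGroup.induction_on q hg⟩
  refine Finite.of_injective f fun q₁ q₂ h => (quotientCentralizerEmbedding g).injective ?_
  ext
  exact congrArg (fun y : N => (y : G)) h

theorem Subgroup.commutatorElement_mem_of_mk_mem_center {G : Type*} [Group G]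
    {N : Subgroup G} [N.Normal] {g : G} (hg : (g : G ⧸ N) ∈ center (G ⧸ N)) (x : G) :
    ⁅x, g⁆ ∈ N := by
  have hstep : g ∈ upperCentralSeriesStep N := by
    rw [upperCentralSeriesStep_eq_comap_center]
    exact hg
  rw [← commutatorElement_inv]
  exact N.inv_mem (hstep x)

theorem quotient_by_center_centerless {G : Type*} [Group G]
    (hfi : ∀ H : Subgroup G, Finite (G ⧸ H) → H = ⊤)
    (hZ : Finite (Subgroup.center G)) :
    Subgroup.center (G ⧸ Subgroup.center G) = ⊥ := by
  rw [eq_bot_iff_forall]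
  intro x hx
  induction x using QuotientGroup.induction_on with
  | H g =>
    have hcentralizer : centralizer {g} = ⊤ :=
      hfi _ (finite_quotient_centralizer_of_commutatorElement_mem
        (commutatorElement_mem_of_mk_mem_center hx))
    rw [centralizer_eq_top_iff_subset, Set.singleton_subset_iff] at hcentralizer
    exact (QuotientGroup.eq_one_iff g).mpr hcentralizer
end

section
/- Let F be a finite group with trivial center, X a topological space, s ⊆ X a clopen set, and g ∈ F. Let f_s ∈ C(X, F) be as above (g on s, identity off s). If f' belongs to the double centralizer C(C(f_s)) inside C(X, F), then f'(x) = e for all x ∉ s. -/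
instance discreteTopologicalGroup {F : Type*} [Group F] [TopologicalSpace F]
    [DiscreteTopology F] : IsTopologicalGroup F where
  continuous_mul := continuous_of_discreteTopology
  continuous_inv := continuous_of_discreteTopology

/-!
Off `s` the map `f_s` is trivial, so for every `h ∈ F` the map equal to `h` off `s` and to `1`
on `s` commutes with `f_s`. An element `f'` of the double centralizer commutes with all of
these, so at a point `x ∉ s` the value `f' x` commutes with every `h ∈ F`; it is central,
hence trivial.
-/

namespace ContinuousMap

variable {X G : Type*} [TopologicalSpace X] [TopologicalSpace G] {s : Set X}

noncomputable def clopenMulIndicator [One G] (hs : IsClopen s) (g : G) : C(X, G) :=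
  ⟨s.mulIndicator fun _ => g, hs.continuous_mulIndicator continuous_const⟩

variable [Monoid G] [ContinuousMul G]

theorem commute_clopenMulIndicator_compl (hs : IsClopen s) (g h : G) :
    Commute (clopenMulIndicator hs g) (clopenMulIndicator hs.compl h) := by
  ext x
  by_cases hx : x ∈ s <;> simp [clopenMulIndicator, hx]

theorem apply_mem_center_of_mem_centralizer_centralizer (hs : IsClopen s) (g : G) {f' : C(X, G)}
    (hf' : f' ∈ Set.centralizer (Set.centralizer {clopenMulIndicator hs g})) {x : X}
    (hx : x ∉ s) : f' x ∈ Set.center G := by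
  refine Semigroup.mem_center_iff.mpr fun h => ?_
  have hk : clopenMulIndicator hs.compl h ∈ Set.centralizer {clopenMulIndicator hs g} := by
    simpa [Set.mem_centralizer_iff] using (commute_clopenMulIndicator_compl hs g h).eq
  simpa [clopenMulIndicator, hx] using congr($(hf' _ hk) x)

end ContinuousMap

open Classical in
theorem double_centralizer_vanishes_off_general {F : Type*} [Group F] [TopologicalSpace F]
    [DiscreteTopology F] (hZ : Subgroup.center F = ⊥)
    {X : Type*} [TopologicalSpace X] (s : Set X) (hs : IsClopen s) (g : F) :
    ∃ hc : Continuous (fun x : X => if x ∈ s then g else (1 : F)),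
      ∀ f' ∈ Subgroup.centralizer
          ((Subgroup.centralizer {(⟨_, hc⟩ : C(X, F))} : Subgroup C(X, F)) : Set C(X, F)),
        ∀ x : X, x ∉ s → f' x = 1 := by
  refine ⟨(ContinuousMap.clopenMulIndicator hs g).continuous, fun f' hf' x hx => ?_⟩
  have hcentral : f' x ∈ Subgroup.center F :=
    ContinuousMap.apply_mem_center_of_mem_centralizer_centralizer hs g hf' hx
  rwa [hZ, Subgroup.mem_bot] at hcentral

open Classical in
theorem double_centralizer_vanishes_off {F : Type*} [Group F] [Finite F] [TopologicalSpace F]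
    [DiscreteTopology F] (hZ : Subgroup.center F = ⊥)
    {X : Type*} [TopologicalSpace X] (s : Set X) (hs : IsClopen s) (g : F) :
    ∃ hc : Continuous (fun x : X => if x ∈ s then g else (1 : F)),
      ∀ f' ∈ Subgroup.centralizer
          ((Subgroup.centralizer {(⟨_, hc⟩ : C(X, F))} : Subgroup C(X, F)) : Set C(X, F)),
        ∀ x : X, x ∉ s → f' x = 1 :=
  double_centralizer_vanishes_off_general hZ s hs g
end
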